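/- arXiv:1905.05379 — 3 statements merged into one kernel-verified Lean document; each statement's English description precedes it below -/
import Mathlib

section
/- Let K be a field, R a commutative ring, I ⊆ R an ideal, and suppose f ∈ R satisfies an equation of integral dependence over I: there exist N ≥ 1 and elements a_1, …, a_N ∈ R with a_j ∈ I^j for each j = 1, …, N and f^N + a_1 f^{N−1} + ⋯ + a_{N−1} f + a_N = 0. Then for every ring homomorphism γ : R → K⟦t⟧ and every natural number i, if γ maps every element of I into the ideal of K⟦t⟧ generated by t^i, then γ(f) lies in the ideal generated by t^i. -/
/-! The order of a power series is an additive valuation on `K⟦t⟧`, and `γ x ∈ (t^i)` says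
`ord (γ x) ≥ i`. If `m = ord (γ f) < i`, then in the image of the equation of integral dependence
the term `γ(f)^N` has order exactly `N m`, while every other term `γ(a_j) γ(f)^(N-j)` has order at
least `i j + (N - j) m > N m`, so the terms cannot cancel. -/

open Finset

theorem AddValuation.le_of_integral_dependence {S : Type*} [Ring S] (v : AddValuation S ℕ∞)
    {g : S} {c : ℕ∞} {N : ℕ} {b : ℕ → S} (hb : ∀ j ∈ Icc 1 N, j • c ≤ v (b j))
    (heq : g ^ N + ∑ j ∈ Icc 1 N, b j * g ^ (N - j) = 0) : c ≤ v g := by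
  by_contra! hlt
  lift v g to ℕ using hlt.ne_top with m hm
  have hterm : ∀ j ∈ Icc 1 N, ((N * m : ℕ) : ℕ∞) < v (b j * g ^ (N - j)) := by
    intro j hj
    obtain ⟨hj1, hjN⟩ := mem_Icc.mp hj
    have hc : ((m + 1 : ℕ) : ℕ∞) ≤ c := Order.add_one_le_of_lt hlt
    calc ((N * m : ℕ) : ℕ∞) < ((j * (m + 1) + (N - j) * m : ℕ) : ℕ∞) := by
          norm_cast
          nth_rw 1 [← Nat.sub_add_cancel hjN]
          nlinarith
      _ = j • ((m + 1 : ℕ) : ℕ∞) + (N - j) • (m : ℕ∞) := by simp [nsmul_eq_mul, mul_add]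
      _ ≤ v (b j * g ^ (N - j)) := by
          rw [v.map_mul, v.map_pow, ← hm]
          exact add_le_add_left ((nsmul_le_nsmul_right hc j).trans (hb j hj)) _
  have hlt' := v.map_lt_sum (ENat.natCast_ne_top _) hterm
  rw [← v.map_neg, ← eq_neg_of_add_eq_zero_left heq, v.map_pow, ← hm] at hlt'
  simp at hlt'

namespace PowerSeries

variable {R : Type*}

theorem X_pow_dvd_iff_le_order [Semiring R] {n : ℕ} {φ : R⟦X⟧} : X ^ n ∣ φ ↔ n ≤ φ.order := by
  rw [order_eq_emultiplicity_X, pow_dvd_iff_le_emultiplicity]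

theorem mem_span_X_pow_iff_le_order [CommSemiring R] {n : ℕ} {φ : R⟦X⟧} :
    φ ∈ Ideal.span {X ^ n} ↔ n ≤ φ.order := by
  rw [Ideal.mem_span_singleton, X_pow_dvd_iff_le_order]

noncomputable def orderAddValuation (R : Type*) [Ring R] [IsDomain R] : AddValuation R⟦X⟧ ℕ∞ :=
  AddValuation.of order order_zero order_one min_order_le_order_add order_mul

@[simp]
theorem orderAddValuation_apply [Ring R] [IsDomain R] (φ : R⟦X⟧) :
    orderAddValuation R φ = φ.order :=
  rfl

end PowerSeries

theorem statement0_general (K : Type*) [Field K] (R : Type*) [CommRing R] (I : Ideal R) (f : R)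
    (N : ℕ) (a : ℕ → R) (ha : ∀ j, 1 ≤ j → j ≤ N → a j ∈ I ^ j)
    (heq : f ^ N + ∑ j ∈ Finset.Icc 1 N, a j * f ^ (N - j) = 0)
    (γ : R →+* PowerSeries K) (i : ℕ)
    (hγ : ∀ x ∈ I, γ x ∈ Ideal.span {(PowerSeries.X : PowerSeries K) ^ i}) :
    γ f ∈ Ideal.span {(PowerSeries.X : PowerSeries K) ^ i} := by
  rw [PowerSeries.mem_span_X_pow_iff_le_order, ← PowerSeries.orderAddValuation_apply]
  refine (PowerSeries.orderAddValuation K).le_of_integral_dependence (b := fun j ↦ γ (a j))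
    (fun j hj ↦ ?_) (by simpa using congrArg γ heq)
  obtain ⟨hj1, hjN⟩ := mem_Icc.mp hj
  have hmem : γ (a j) ∈ Ideal.span {(PowerSeries.X : PowerSeries K) ^ i} ^ j :=
    Ideal.le_comap_pow γ j (Ideal.pow_right_mono hγ j (ha j hj1 hjN))
  rw [Ideal.span_singleton_pow, ← pow_mul, PowerSeries.mem_span_X_pow_iff_le_order] at hmem
  simpa [mul_comm] using hmem

/-- If `f` satisfies an equation of integral dependence over the ideal `I`,
then any ring homomorphism `γ : R → K⟦t⟧` mapping `I` into `(t^i)` maps `f` into `(t^i)`. -/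
theorem statement0 (K : Type*) [Field K] (R : Type*) [CommRing R] (I : Ideal R) (f : R)
    (N : ℕ) (hN : 1 ≤ N) (a : ℕ → R) (ha : ∀ j, 1 ≤ j → j ≤ N → a j ∈ I ^ j)
    (heq : f ^ N + ∑ j ∈ Finset.Icc 1 N, a j * f ^ (N - j) = 0)
    (γ : R →+* PowerSeries K) (i : ℕ)
    (hγ : ∀ x ∈ I, γ x ∈ Ideal.span {(PowerSeries.X : PowerSeries K) ^ i}) :
    γ f ∈ Ideal.span {(PowerSeries.X : PowerSeries K) ^ i} :=
  statement0_general K R I f N a ha heq γ i hγ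
end

section
/- Let K be a field, 1 ≤ k < m, and fix i ∈ {1,…,k} and i', j ∈ {k+1,…,m}. Set A = {1,…,k} ∪ {i'} and B = {1,…,k} ∪ {j}. Let Λ ∈ ⋀^{(k+1)²−2} Ω_{R_k/K} be the exterior product, taken in lexicographic order of the indices, of the differentials d[x_{pq}] over all pairs (p,q) ∈ A×B with (p,q) ∉ {(i,j), (i',j)}. Then there exists a sign ε ∈ {1,−1} such that [Δ_{A∖{i}, {1,…,k}}] · (Λ ∧ d[x_{ij}]) = ε · [Δ_{{1,…,k},{1,…,k}}] · (Λ ∧ d[x_{i'j}]) in ⋀^{(k+1)²−1} Ω_{R_k/K}. -/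
open MvPolynomial

/-- The `r × r` minor `Δ_{A,B}` of the generic `m × m` matrix `(x_{ij})`. -/
noncomputable def genMinor (K : Type*) [Field K] (m r : ℕ) (A B : Finset (Fin m))
    (hA : A.card = r) (hB : B.card = r) : MvPolynomial (Fin m × Fin m) K :=
  (Matrix.of fun a b : Fin r =>
    (X ((↑(A.orderIsoOfFin hA a) : Fin m), (↑(B.orderIsoOfFin hB b) : Fin m)) :
      MvPolynomial (Fin m × Fin m) K)).det

/-- The determinantal ideal `I_r`, generated by all `r × r` minors of the generic matrix. -/
noncomputable def detIdeal (K : Type*) [Field K] (m r : ℕ) :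
    Ideal (MvPolynomial (Fin m × Fin m) K) :=
  Ideal.span {p | ∃ (A B : Finset (Fin m)) (hA : A.card = r) (hB : B.card = r),
    p = genMinor K m r A B hA hB}

/-- The determinantal ring `R_k = R / I_{k+1}`. -/
noncomputable abbrev DetRing (K : Type*) [Field K] (m k : ℕ) :=
  MvPolynomial (Fin m × Fin m) K ⧸ detIdeal K m (k + 1)

set_option synthInstance.maxHeartbeats 1000000 in
/-- The exterior product, in lexicographic order over the index set `S`, of the
differentials `d[x_{ij}]`, taken in the exterior algebra of the `R_k`-module `Ω_{R_k/K}`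
(its degree-`|S|` piece is the corresponding exterior power). -/
noncomputable def dWedge (K : Type*) [Field K] (m k : ℕ) (S : Finset (Fin m × Fin m)) :
    ExteriorAlgebra (DetRing K m k) (KaehlerDifferential K (DetRing K m k)) :=
  (((S.map toLex.toEmbedding).sort (· ≤ ·)).map fun p =>
    ExteriorAlgebra.ι (DetRing K m k)
      ((KaehlerDifferential.D K (DetRing K m k))
        (Ideal.Quotient.mk (detIdeal K m (k + 1)) (X (ofLex p))))).prod

/-- The subset `{1,…,k}` of the row/column indices `{1,…,m}`. -/
def stdSet (m k : ℕ) (h : k ≤ m) : Finset (Fin m) :=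
  Finset.univ.map (Fin.castLEEmb h)

theorem stdSet_card (m k : ℕ) (h : k ≤ m) : (stdSet m k h).card = k := by
  simp [stdSet]

theorem mem_stdSet (m k : ℕ) (h : k ≤ m) (x : Fin m) : x ∈ stdSet m k h ↔ (x : ℕ) < k := by
  simp only [stdSet, Finset.mem_map, Finset.mem_univ, true_and]
  constructor
  · rintro ⟨y, rfl⟩; exact y.isLt
  · intro hx; exact ⟨⟨x, hx⟩, rfl⟩

theorem eraseCard (m k : ℕ) (h : k ≤ m) (i i' : Fin m) (hi : (i : ℕ) < k)
    (hi' : k ≤ (i' : ℕ)) : ((stdSet m k h ∪ {i'}).erase i).card = k := by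
  have hi'n : i' ∉ stdSet m k h := by rw [mem_stdSet]; omega
  have hiA : i ∈ stdSet m k h ∪ {i'} :=
    Finset.mem_union_left _ ((mem_stdSet m k h i).mpr hi)
  rw [Finset.card_erase_of_mem hiA,
    Finset.card_union_of_disjoint (by simpa [Finset.disjoint_singleton_right] using hi'n),
    stdSet_card, Finset.card_singleton]
  rfl

/-!
The `(k+1)`-minor `Δ = Δ_{A,B}` vanishes in `R_k`, hence so does `Λ ∧ d[Δ]`. Expanding
`d[Δ] = ∑ₛ [∂Δ/∂xₛ] d[xₛ]`, a term with `s ∈ A × B` other than `(i,j)`, `(i',j)` dies because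
`d[xₛ]` already occurs in `Λ`, and a term with `s ∉ A × B` dies because `Δ` does not involve `xₛ`.
The two surviving coefficients are the cofactors of `x_{ij}` and `x_{i'j}` in `Δ`, namely
`± Δ_{A∖{i},{1,…,k}}` and `Δ_{{1,…,k},{1,…,k}}` (the latter with sign `(-1)^{2k}`).
-/

namespace ExteriorAlgebra

variable {R M α : Type*} [CommRing R] [AddCommGroup M] [Module R M]

theorem list_prod_map_ι_mul_ι (f : α → M) (L : List α) (v : M) :
    (L.map fun a => ι R (f a)).prod * ι R v =
      (-1 : R) ^ L.length • (ι R v * (L.map fun a => ι R (f a)).prod) := by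
  induction L with
  | nil => simp
  | cons a L ih =>
    have hswap : ι R (f a) * ι R v = -(ι R v * ι R (f a)) :=
      eq_neg_of_add_eq_zero_left (ι_add_mul_swap _ _)
    rw [List.map_cons, List.prod_cons, mul_assoc, ih, mul_smul_comm, ← mul_assoc, hswap,
      List.length_cons, pow_succ', mul_smul, neg_mul, mul_assoc, neg_one_smul, smul_neg]

theorem list_prod_map_ι_mul_ι_of_mem (f : α → M) {L : List α} {x : α} (hx : x ∈ L) :
    (L.map fun a => ι R (f a)).prod * ι R (f x) = 0 := by
  obtain ⟨s, t, rfl⟩ := List.append_of_mem hx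
  rw [List.map_append, List.map_cons, List.prod_append, List.prod_cons, mul_assoc, mul_assoc,
    list_prod_map_ι_mul_ι, mul_smul_comm, ← mul_assoc, ι_sq_zero, zero_mul, smul_zero,
    mul_zero]

end ExteriorAlgebra

theorem Derivation.map_det_eq_zero {R A M n : Type*} [CommRing R] [CommRing A] [Algebra R A]
    [AddCommGroup M] [Module A M] [Module R M] [Fintype n] [DecidableEq n]
    (D : Derivation R A M) (N : Matrix n n A) (h : ∀ a b, D (N a b) = 0) : D N.det = 0 := by
  rw [Matrix.det_apply, map_sum]
  refine Finset.sum_eq_zero fun σ _ => ?_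
  have hprod : D (∏ i, N (σ i) i) = 0 :=
    Finset.prod_induction _ (fun p => D p = 0)
      (fun p q hp hq => by rw [Derivation.leibniz, hp, hq, smul_zero, smul_zero, add_zero])
      D.map_one_eq_zero fun i _ => h _ _
  rw [Units.smul_def, map_zsmul, hprod, smul_zero]

theorem MvPolynomial.pderiv_det_X_succ {R α β : Type*} [CommRing R] {r : ℕ}
    (f : Fin (r + 1) → α) (g : Fin (r + 1) → β) (hf : Function.Injective f)
    (hg : Function.Injective g) (a₀ b₀ : Fin (r + 1)) :
    pderiv (f a₀, g b₀) (Matrix.of fun a b => (X (f a, g b) : MvPolynomial (α × β) R)).det =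
      (-1) ^ ((a₀ : ℕ) + b₀) *
        (Matrix.of fun a b => (X (f (a₀.succAbove a), g (b₀.succAbove b)) :
          MvPolynomial (α × β) R)).det := by
  classical
  have hminor : ∀ b : Fin (r + 1), pderiv (f a₀, g b₀) ((Matrix.of fun a b =>
      (X (f a, g b) : MvPolynomial (α × β) R)).submatrix a₀.succAbove b.succAbove).det = 0 :=
    fun b => Derivation.map_det_eq_zero _ _ fun a c =>
      pderiv_X_of_ne fun hc => Fin.succAbove_ne a₀ a (hf (congrArg Prod.fst hc))
  have hentry : ∀ b, pderiv (f a₀, g b₀) (X (f a₀, g b) : MvPolynomial (α × β) R) =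
      if b = b₀ then 1 else 0 := by
    intro b
    split_ifs with hb
    · rw [hb, pderiv_X_self]
    · exact pderiv_X_of_ne fun hc => hb (hg (congrArg Prod.snd hc))
  have hsign : ∀ n : ℕ, pderiv (f a₀, g b₀) ((-1) ^ n : MvPolynomial (α × β) R) = 0 := by
    intro n
    rw [Derivation.leibniz_pow, map_neg, Derivation.map_one_eq_zero, neg_zero, smul_zero, smul_zero]
  rw [Matrix.det_succ_row _ a₀, map_sum]
  simp only [Derivation.leibniz, hminor, hsign, Matrix.of_apply, hentry]
  simp only [smul_eq_mul, mul_zero, add_zero, zero_add, mul_ite, mul_one, Finset.sum_ite_eq',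
    Finset.mem_univ, if_true]
  exact mul_comm _ _

namespace KaehlerDifferential

variable {K S σ : Type*} [CommRing K] [CommRing S] [Algebra K S] [Fintype σ]

theorem D_algHom_mvPolynomial (φ : MvPolynomial σ K →ₐ[K] S) (p : MvPolynomial σ K) :
    D K S (φ p) = ∑ s, φ (pderiv s p) • D K S (φ (X s)) := by
  classical
  induction p using MvPolynomial.induction_on with
  | C a => simp
  | add p q hp hq => simp only [map_add, hp, hq, add_smul, Finset.sum_add_distrib]
  | mul_X p t hp =>
    have hX : ∑ s, φ (p * pderiv s (X t)) • D K S (φ (X s)) = φ p • D K S (φ (X t)) := by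
      rw [Finset.sum_eq_single t (fun s _ hs => by rw [pderiv_X_of_ne hs.symm, mul_zero,
        map_zero, zero_smul]) (by simp), pderiv_X_self, mul_one]
    rw [map_mul, Derivation.leibniz, hp, Finset.smul_sum, ← hX, ← Finset.sum_add_distrib]
    refine Finset.sum_congr rfl fun s _ => ?_
    rw [Derivation.leibniz, smul_eq_mul, smul_eq_mul, map_add, map_mul φ (X t), add_smul,
      smul_smul]

theorem pderiv_smul_mul_ι_D_add_eq_zero (φ : MvPolynomial σ K →ₐ[K] S)
    {f : MvPolynomial σ K} (hf : φ f = 0) (w : ExteriorAlgebra S Ω[S⁄K]) {u v : σ} (huv : u ≠ v)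
    (hvanish : ∀ s, s ≠ u → s ≠ v →
      φ (pderiv s f) = 0 ∨ w * ExteriorAlgebra.ι S (D K S (φ (X s))) = 0) :
    φ (pderiv u f) • (w * ExteriorAlgebra.ι S (D K S (φ (X u)))) +
      φ (pderiv v f) • (w * ExteriorAlgebra.ι S (D K S (φ (X v)))) = 0 := by
  classical
  have hsum : ∑ s, φ (pderiv s f) • (w * ExteriorAlgebra.ι S (D K S (φ (X s)))) = 0 := by
    simp only [← Algebra.mul_smul_comm, ← Finset.mul_sum, ← map_smul, ← map_sum,
      ← D_algHom_mvPolynomial, hf, map_zero, mul_zero]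
  rwa [← Finset.sum_subset (Finset.subset_univ {u, v}) fun s _ hs => ?_,
    Finset.sum_pair huv] at hsum
  rcases hvanish s (fun h => hs (by simp [h])) (fun h => hs (by simp [h])) with h | h <;>
    simp [h]

end KaehlerDifferential

theorem exists_sign_smul_eq_of_neg_one_pow_mul_smul_add_eq_zero {R M : Type*} [CommRing R]
    [AddCommGroup M] [Module R M] (n : ℕ) {c d : R} {a b : M}
    (h : ((-1) ^ n * c) • a + d • b = 0) :
    ∃ ε : ℤ, (ε = 1 ∨ ε = -1) ∧ c • a = ε • d • b := by
  rcases neg_one_pow_eq_or R n with hn | hn <;> rw [hn] at h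
  · exact ⟨-1, .inr rfl, by
      rw [neg_one_zsmul]; exact eq_neg_of_add_eq_zero_left (by simpa using h)⟩
  · exact ⟨1, .inl rfl, by rw [one_zsmul]; exact neg_add_eq_zero.mp (by simpa using h)⟩

theorem Finset.orderEmbOfFin_erase {α : Type*} [LinearOrder α] {r : ℕ} (A : Finset α)
    (hA : A.card = r + 1) (a₀ : Fin (r + 1)) {p : α} (hp : A.orderEmbOfFin hA a₀ = p)
    (h : (A.erase p).card = r) (x : Fin r) :
    (A.erase p).orderEmbOfFin h x = A.orderEmbOfFin hA (a₀.succAbove x) := by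
  subst hp
  have hmem : ∀ y, A.orderEmbOfFin hA (a₀.succAbove y) ∈ A.erase (A.orderEmbOfFin hA a₀) :=
    fun y => Finset.mem_erase.mpr ⟨fun hc => Fin.succAbove_ne a₀ y
      ((A.orderEmbOfFin hA).injective hc), Finset.orderEmbOfFin_mem _ _ _⟩
  exact (congrFun (Finset.orderEmbOfFin_unique h hmem
    ((A.orderEmbOfFin hA).strictMono.comp (Fin.strictMono_succAbove a₀))) x).symm

section GenericMinors

variable (K : Type*) [Field K] {m : ℕ}

theorem genMinor_eq_det (r : ℕ) (A B : Finset (Fin m)) (hA : A.card = r) (hB : B.card = r) :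
    genMinor K m r A B hA hB = (Matrix.of fun a b : Fin r =>
      (X (A.orderEmbOfFin hA a, B.orderEmbOfFin hB b) : MvPolynomial (Fin m × Fin m) K)).det := by
  simp only [genMinor, Finset.coe_orderIsoOfFin_apply]

theorem pderiv_genMinor {r : ℕ} {A B A' B' : Finset (Fin m)} (hA : A.card = r + 1)
    (hB : B.card = r + 1) (hA' : A'.card = r) (hB' : B'.card = r) (a₀ b₀ : Fin (r + 1))
    {p q : Fin m} (hp : A.orderEmbOfFin hA a₀ = p) (hq : B.orderEmbOfFin hB b₀ = q)
    (hpA : A.erase p = A') (hqB : B.erase q = B') :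
    pderiv (p, q) (genMinor K m (r + 1) A B hA hB) =
      (-1) ^ ((a₀ : ℕ) + b₀) * genMinor K m r A' B' hA' hB' := by
  subst hpA hqB
  rw [genMinor_eq_det, genMinor_eq_det]
  simp only [Finset.orderEmbOfFin_erase A hA a₀ hp, Finset.orderEmbOfFin_erase B hB b₀ hq]
  subst hp hq
  exact pderiv_det_X_succ _ _ (A.orderEmbOfFin hA).injective (B.orderEmbOfFin hB).injective _ _

theorem pderiv_genMinor_of_notMem {r : ℕ} {A B : Finset (Fin m)} (hA : A.card = r)
    (hB : B.card = r) {s : Fin m × Fin m} (hs : s ∉ A ×ˢ B) :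
    pderiv s (genMinor K m r A B hA hB) = 0 := by
  rw [genMinor_eq_det]
  refine Derivation.map_det_eq_zero _ _ fun a b => pderiv_X_of_ne fun hc => hs ?_
  rw [← hc]
  exact Finset.mem_product.mpr ⟨Finset.orderEmbOfFin_mem _ _ _, Finset.orderEmbOfFin_mem _ _ _⟩

theorem mk_genMinor_eq_zero (k : ℕ) (A B : Finset (Fin m)) (hA : A.card = k + 1)
    (hB : B.card = k + 1) :
    Ideal.Quotient.mk (detIdeal K m (k + 1)) (genMinor K m (k + 1) A B hA hB) = 0 :=
  Ideal.Quotient.eq_zero_iff_mem.mpr (Ideal.subset_span ⟨A, B, hA, hB, rfl⟩)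

end GenericMinors

section StandardSets

variable {m k : ℕ} (h : k ≤ m) {x : Fin m}

theorem card_stdSet_union_singleton (hx : k ≤ (x : ℕ)) :
    (stdSet m k h ∪ {x}).card = k + 1 := by
  have hx' : x ∉ stdSet m k h := by rw [mem_stdSet]; omega
  rw [Finset.card_union_of_disjoint (Finset.disjoint_singleton_right.mpr hx'), stdSet_card,
    Finset.card_singleton]

theorem stdSet_union_singleton_erase (hx : k ≤ (x : ℕ)) :
    (stdSet m k h ∪ {x}).erase x = stdSet m k h := by
  have hx' : x ∉ stdSet m k h := by rw [mem_stdSet]; omega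
  rw [Finset.union_comm, ← Finset.insert_eq, Finset.erase_insert hx']

theorem orderEmbOfFin_stdSet_union_singleton (hx : k ≤ (x : ℕ))
    (hA : (stdSet m k h ∪ {x}).card = k + 1) (t : Fin (k + 1)) :
    (stdSet m k h ∪ {x}).orderEmbOfFin hA t =
      if ht : (t : ℕ) < k then ⟨t, ht.trans_le h⟩ else x := by
  refine (congrFun (Finset.orderEmbOfFin_unique hA
    (f := fun t => if ht : (t : ℕ) < k then ⟨t, ht.trans_le h⟩ else x) (fun t => ?_)
    fun t₁ t₂ hlt => ?_) t).symm
  · split_ifs with ht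
    · exact Finset.mem_union_left _ ((mem_stdSet _ _ _ _).mpr ht)
    · exact Finset.mem_union_right _ (Finset.mem_singleton_self x)
  · have := t₂.isLt
    have : (t₁ : ℕ) < t₂ := hlt
    dsimp only
    split_ifs <;> simp only [Fin.lt_def] <;> omega

theorem orderEmbOfFin_stdSet_union_singleton_last (hx : k ≤ (x : ℕ))
    (hA : (stdSet m k h ∪ {x}).card = k + 1) :
    (stdSet m k h ∪ {x}).orderEmbOfFin hA (Fin.last k) = x := by
  rw [orderEmbOfFin_stdSet_union_singleton h hx, dif_neg (by simp)]

theorem orderEmbOfFin_stdSet_union_singleton_of_lt (hx : k ≤ (x : ℕ))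
    (hA : (stdSet m k h ∪ {x}).card = k + 1) {y : Fin m} (hy : (y : ℕ) < k) :
    (stdSet m k h ∪ {x}).orderEmbOfFin hA ⟨y, by omega⟩ = y := by
  rw [orderEmbOfFin_stdSet_union_singleton h hx, dif_pos hy]

end StandardSets

section DeterminantalRing

variable (K : Type*) [Field K] {m : ℕ} (k : ℕ)

theorem dWedge_mul_ι_D_X_of_mem {S : Finset (Fin m × Fin m)} {s : Fin m × Fin m} (hs : s ∈ S) :
    dWedge K m k S * ExteriorAlgebra.ι (DetRing K m k)
      (KaehlerDifferential.D K (DetRing K m k) (Ideal.Quotient.mk (detIdeal K m (k + 1)) (X s)))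
      = 0 :=
  ExteriorAlgebra.list_prod_map_ι_mul_ι_of_mem _
    ((Finset.mem_sort _).mpr (Finset.mem_map_of_mem _ hs) : toLex s ∈ _)

theorem genMinor_cofactor_exchange (A B : Finset (Fin m)) (hA : A.card = k + 1)
    (hB : B.card = k + 1) {u v : Fin m × Fin m} (huv : u ≠ v) :
    Ideal.Quotient.mk (detIdeal K m (k + 1)) (pderiv u (genMinor K m (k + 1) A B hA hB)) •
        (dWedge K m k (A ×ˢ B \ {u, v}) * ExteriorAlgebra.ι (DetRing K m k)
          (KaehlerDifferential.D K (DetRing K m k)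
            (Ideal.Quotient.mk (detIdeal K m (k + 1)) (X u)))) +
      Ideal.Quotient.mk (detIdeal K m (k + 1)) (pderiv v (genMinor K m (k + 1) A B hA hB)) •
        (dWedge K m k (A ×ˢ B \ {u, v}) * ExteriorAlgebra.ι (DetRing K m k)
          (KaehlerDifferential.D K (DetRing K m k)
            (Ideal.Quotient.mk (detIdeal K m (k + 1)) (X v)))) = 0 := by
  refine KaehlerDifferential.pderiv_smul_mul_ι_D_add_eq_zero (Ideal.Quotient.mkₐ K _)
    (mk_genMinor_eq_zero K k A B hA hB) _ huv fun s hsu hsv => ?_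
  by_cases hsAB : s ∈ A ×ˢ B
  · exact .inr (dWedge_mul_ι_D_X_of_mem K k (Finset.mem_sdiff.mpr ⟨hsAB, by simp [hsu, hsv]⟩))
  · exact .inl (by rw [pderiv_genMinor_of_notMem K hA hB hsAB, map_zero])

end DeterminantalRing

theorem statement3_general (K : Type*) [Field K] (m k : ℕ) (hkm : k < m)
    (i i' j : Fin m) (hi : (i : ℕ) < k) (hi' : k ≤ (i' : ℕ)) (hj : k ≤ (j : ℕ)) :
    ∃ ε : ℤ, (ε = 1 ∨ ε = -1) ∧
      Ideal.Quotient.mk (detIdeal K m (k + 1))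
          (genMinor K m k ((stdSet m k hkm.le ∪ {i'}).erase i) (stdSet m k hkm.le)
            (eraseCard m k hkm.le i i' hi hi') (stdSet_card m k hkm.le)) •
        (dWedge K m k
            (((stdSet m k hkm.le ∪ {i'}) ×ˢ (stdSet m k hkm.le ∪ {j})) \ {(i, j), (i', j)}) *
          ExteriorAlgebra.ι (DetRing K m k)
            ((KaehlerDifferential.D K (DetRing K m k))
              (Ideal.Quotient.mk (detIdeal K m (k + 1)) (X (i, j)))))
      = ε •
        (Ideal.Quotient.mk (detIdeal K m (k + 1))
            (genMinor K m k (stdSet m k hkm.le) (stdSet m k hkm.le)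
              (stdSet_card m k hkm.le) (stdSet_card m k hkm.le)) •
          (dWedge K m k
              (((stdSet m k hkm.le ∪ {i'}) ×ˢ (stdSet m k hkm.le ∪ {j})) \ {(i, j), (i', j)}) *
            ExteriorAlgebra.ι (DetRing K m k)
              ((KaehlerDifferential.D K (DetRing K m k))
                (Ideal.Quotient.mk (detIdeal K m (k + 1)) (X (i', j)))))) := by
  have hA := card_stdSet_union_singleton hkm.le hi'
  have hB := card_stdSet_union_singleton hkm.le hj
  have hrel := genMinor_cofactor_exchange K k _ _ hA hB (u := (i, j)) (v := (i', j))
    (by simp only [ne_eq, Prod.mk.injEq, Fin.ext_iff]; omega)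
  have hi'A := orderEmbOfFin_stdSet_union_singleton_last hkm.le hi' hA
  have hjB := orderEmbOfFin_stdSet_union_singleton_last hkm.le hj hB
  have hiA := orderEmbOfFin_stdSet_union_singleton_of_lt hkm.le hi' hA hi
  rw [pderiv_genMinor K hA hB (eraseCard m k hkm.le i i' hi hi') (stdSet_card m k hkm.le) _ _
      hiA hjB rfl (stdSet_union_singleton_erase hkm.le hj),
    pderiv_genMinor K hA hB (stdSet_card m k hkm.le) (stdSet_card m k hkm.le) _ _ hi'A hjB
      (stdSet_union_singleton_erase hkm.le hi') (stdSet_union_singleton_erase hkm.le hj)] at hrel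
  simp only [map_mul, map_pow, map_neg, map_one, Fin.val_last, Even.neg_one_pow ⟨k, rfl⟩,
    one_mul] at hrel
  exact exists_sign_smul_eq_of_neg_one_pow_mul_smul_add_eq_zero _ hrel

set_option synthInstance.maxHeartbeats 1000000 in
/-- the one-row exchange relation between local canonical forms on the
determinantal ring.  Here `A = {1,…,k} ∪ {i'}`, `B = {1,…,k} ∪ {j}`, and `Λ` is the
lexicographically ordered exterior product of the `d[x_{pq}]` over
`(p,q) ∈ A×B ∖ {(i,j), (i',j)}`. -/
theorem statement3 (K : Type*) [Field K] (m k : ℕ) (hk : 1 ≤ k) (hkm : k < m)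
    (i i' j : Fin m) (hi : (i : ℕ) < k) (hi' : k ≤ (i' : ℕ)) (hj : k ≤ (j : ℕ)) :
    ∃ ε : ℤ, (ε = 1 ∨ ε = -1) ∧
      Ideal.Quotient.mk (detIdeal K m (k + 1))
          (genMinor K m k ((stdSet m k hkm.le ∪ {i'}).erase i) (stdSet m k hkm.le)
            (eraseCard m k hkm.le i i' hi hi') (stdSet_card m k hkm.le)) •
        (dWedge K m k
            (((stdSet m k hkm.le ∪ {i'}) ×ˢ (stdSet m k hkm.le ∪ {j})) \ {(i, j), (i', j)}) *
          ExteriorAlgebra.ι (DetRing K m k)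
            ((KaehlerDifferential.D K (DetRing K m k))
              (Ideal.Quotient.mk (detIdeal K m (k + 1)) (X (i, j)))))
      = ε •
        (Ideal.Quotient.mk (detIdeal K m (k + 1))
            (genMinor K m k (stdSet m k hkm.le) (stdSet m k hkm.le)
              (stdSet_card m k hkm.le) (stdSet_card m k hkm.le)) •
          (dWedge K m k
              (((stdSet m k hkm.le ∪ {i'}) ×ˢ (stdSet m k hkm.le ∪ {j})) \ {(i, j), (i', j)}) *
            ExteriorAlgebra.ι (DetRing K m k)
              ((KaehlerDifferential.D K (DetRing K m k))
                (Ideal.Quotient.mk (detIdeal K m (k + 1)) (X (i', j)))))) :=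
  statement3_general K m k hkm i i' j hi hi' hj
end

section
/- Let K be a field, m ≥ 1, 0 ≤ q ≤ m, and let λ_1 ≥ λ_2 ≥ ⋯ ≥ λ_m be a nonincreasing sequence of elements of ℕ ∪ {∞}. Let δ_λ be the m×m diagonal matrix over the power series ring K⟦t⟧ with diagonal entries t^{λ_1}, …, t^{λ_m}, where t^∞ is interpreted as 0, and let x_q be the m×m diagonal matrix over K whose first m−q diagonal entries are 0 and whose last q diagonal entries are 1. Then there exist invertible matrices g, h ∈ GL_m(K⟦t⟧) such that the matrix obtained from g·δ_λ·h by taking the constant term of each entry equals x_q, if and only if λ_i ≥ 1 for all i ≤ m−q and λ_i = 0 for all i > m−q. -/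
/-!
The constant-term map `K⟦t⟧ → K` is a ring homomorphism, so it sends invertible matrices to
invertible ones; hence the rank of the constant term of `g δ_λ h` is that of `δ_λ(0)`, the 0/1
diagonal matrix with a `1` exactly where `λ_i = 0`. Since `λ` is nonincreasing, `{i | λ_i = 0}` is an
upper set of `Fin m`, as is `{i | i ≥ m - q}`, the support of `x_q`; upper sets of a finite chain
are determined by their cardinality, so equal ranks force the two sets to coincide. Conversely, if
they coincide then `δ_λ(0) = x_q` already, with `g = h = 1`.
-/

open Matrix

/-- `t^e` in `K⟦t⟧` for an extended natural number `e`, with `t^∞ = 0`. -/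
noncomputable def tPow (K : Type*) [Field K] (e : ℕ∞) : PowerSeries K :=
  WithTop.recTopCoe 0 (fun n => (PowerSeries.X : PowerSeries K) ^ n) e

open Finset

lemma tPow_coe (K : Type*) [Field K] (n : ℕ) : tPow K n = PowerSeries.X ^ n := rfl

lemma constantCoeff_tPow (K : Type*) [Field K] (e : ℕ∞) :
    PowerSeries.constantCoeff (tPow K e) = if e = 0 then 1 else 0 := by
  induction e using ENat.recTopCoe with
  | top => simp [show tPow K ⊤ = 0 from rfl]
  | coe n => rw [tPow_coe]; cases n <;> simp

namespace Matrix

variable {n R K : Type*} [Fintype n] [DecidableEq n] [CommRing R] [Field K]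

lemma isUnit_det_map_of_isUnit {A : Matrix n n R} (hA : IsUnit A) (f : R →+* K) :
    IsUnit (A.map f).det := by
  simpa [RingHom.map_det] using ((isUnit_iff_isUnit_det A).mp hA).map f

lemma rank_map_units_mul_mul_units (f : R →+* K) (g h : GL n R) (A : Matrix n n R) :
    (((g : Matrix n n R) * A * h).map f).rank = (A.map f).rank := by
  rw [Matrix.map_mul, Matrix.map_mul,
    rank_mul_eq_left_of_isUnit_det _ _ (isUnit_det_map_of_isUnit h.isUnit f),
    rank_mul_eq_right_of_isUnit_det _ _ (isUnit_det_map_of_isUnit g.isUnit f)]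

lemma rank_diagonal_ite (p : n → Prop) [DecidablePred p] :
    (diagonal fun i => if p i then (1 : K) else 0).rank = #{i | p i} := by
  classical
  rw [rank_diagonal, Fintype.card_subtype]
  congr 1
  ext i
  simp

end Matrix

lemma Finset.eq_of_isUpperSet_of_card_eq {α : Type*} [LinearOrder α] {s t : Finset α}
    (hs : IsUpperSet (s : Set α)) (ht : IsUpperSet (t : Set α)) (hst : #s = #t) : s = t := by
  rcases hs.total ht with h | h
  · exact eq_of_subset_of_card_le (coe_subset.mp h) hst.ge
  · exact (eq_of_subset_of_card_le (coe_subset.mp h) hst.le).symm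

lemma Antitone.isUpperSet_setOf_le {ι α : Type*} [Preorder ι] [Preorder α] {f : ι → α}
    (hf : Antitone f) (a : α) : IsUpperSet {i | f i ≤ a} :=
  fun _ _ hij hi => (hf hij).trans hi

lemma map_constantCoeff_diagonal_tPow {K n : Type*} [Field K] [DecidableEq n] (lam : n → ℕ∞) :
    (diagonal fun i => tPow K (lam i)).map PowerSeries.constantCoeff =
      diagonal fun i => if lam i = 0 then 1 else 0 := by
  rw [diagonal_map (map_zero _)]
  simp only [constantCoeff_tPow]

theorem statement8_general (K : Type*) [Field K] (m q : ℕ)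
    (lam : Fin m → ℕ∞) (hlam : Antitone lam) :
    (∃ g h : GL (Fin m) (PowerSeries K),
        ((g : Matrix (Fin m) (Fin m) (PowerSeries K)) *
            Matrix.diagonal (fun x : Fin m => tPow K (lam x)) *
            (h : Matrix (Fin m) (Fin m) (PowerSeries K))).map
          (PowerSeries.constantCoeff (R := K)) =
        Matrix.diagonal (fun x : Fin m => if (x : ℕ) < m - q then (0 : K) else 1))
      ↔ ((∀ x : Fin m, (x : ℕ) < m - q → 1 ≤ lam x) ∧
          (∀ x : Fin m, m - q ≤ (x : ℕ) → lam x = 0)) := by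
  classical
  have hxq : (diagonal fun x : Fin m => if (x : ℕ) < m - q then (0 : K) else 1) =
      diagonal fun x : Fin m => if m - q ≤ (x : ℕ) then 1 else 0 := by
    simp only [← not_lt, ite_not]
  have hcond : ((∀ x : Fin m, (x : ℕ) < m - q → 1 ≤ lam x) ∧
      (∀ x : Fin m, m - q ≤ (x : ℕ) → lam x = 0)) ↔ ∀ x, lam x = 0 ↔ m - q ≤ (x : ℕ) := by
    simp only [Order.one_le_iff_ne_zero, ← not_le, iff_def, forall_and, and_comm, not_imp_not]
  rw [hxq, hcond]
  constructor
  · rintro ⟨g, h, hgh⟩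
    have hcard : #{x | lam x = 0} = #{x : Fin m | m - q ≤ (x : ℕ)} := by
      rw [← rank_diagonal_ite (K := K), ← rank_diagonal_ite (K := K), ← hgh,
        rank_map_units_mul_mul_units, map_constantCoeff_diagonal_tPow]
    have hsets := Finset.eq_of_isUpperSet_of_card_eq
      (by rw [coe_filter_univ]; simpa using hlam.isUpperSet_setOf_le 0)
      (by rw [coe_filter_univ]; exact fun a b hab (ha : m - q ≤ (a : ℕ)) => ha.trans hab)
      hcard
    simpa [Finset.ext_iff] using hsets
  · intro hzero
    refine ⟨1, 1, ?_⟩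
    rw [Units.val_one, Matrix.one_mul, Matrix.mul_one, map_constantCoeff_diagonal_tPow]
    simp only [hzero]

/-- for a nonincreasing extended partition `λ`, the diagonal arc `δ_λ` can be
moved by `GL_m(K⟦t⟧) × GL_m(K⟦t⟧)` to an arc whose constant term is the rank-`q` diagonal
matrix `x_q` if and only if `λ_i ≥ 1` for `i ≤ m−q` and `λ_i = 0` for `i > m−q`. -/
theorem statement8 (K : Type*) [Field K] (m q : ℕ) (hm : 1 ≤ m) (hq : q ≤ m)
    (lam : Fin m → ℕ∞) (hlam : Antitone lam) :
    (∃ g h : GL (Fin m) (PowerSeries K),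
        ((g : Matrix (Fin m) (Fin m) (PowerSeries K)) *
            Matrix.diagonal (fun x : Fin m => tPow K (lam x)) *
            (h : Matrix (Fin m) (Fin m) (PowerSeries K))).map
          (PowerSeries.constantCoeff (R := K)) =
        Matrix.diagonal (fun x : Fin m => if (x : ℕ) < m - q then (0 : K) else 1))
      ↔ ((∀ x : Fin m, (x : ℕ) < m - q → 1 ≤ lam x) ∧
          (∀ x : Fin m, m - q ≤ (x : ℕ) → lam x = 0)) :=
  statement8_general K m q lam hlam
end
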